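/- Let L = x_1,...,x_ℓ be a genlex ordering of X ⊆ {0,1}^n, let 1 ≤ i < ℓ, and let β := min B_L(x_i). Then B_L(x_i) \ {β} = B_L(x_{i+1}) \ {1,...,β}. -/

import Mathlib

def lamPos {n : ℕ} (x y : Fin n → Bool) : ℕ :=
  (Finset.univ.filter (fun i : Fin n => x i ≠ y i)).sup (fun i => (i : ℕ) + 1)

def hamming {n : ℕ} (x y : Fin n → Bool) : ℕ :=
  (Finset.univ.filter (fun i : Fin n => x i ≠ y i)).card

def sameSuffix {n : ℕ} (k : ℕ) (x y : Fin n → Bool) : Prop :=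
  ∀ i : Fin n, n - k ≤ (i : ℕ) → x i = y i

def IsOrdering {n : ℕ} (X : Finset (Fin n → Bool)) (L : List (Fin n → Bool)) : Prop :=
  L.Nodup ∧ ∀ x, x ∈ L ↔ x ∈ X

def IsGenlex {n : ℕ} (L : List (Fin n → Bool)) : Prop :=
  ∀ (k i j m : ℕ) (hij : i ≤ j) (hjm : j ≤ m) (hm : m < L.length),
    sameSuffix k (L.get ⟨i, by omega⟩) (L.get ⟨m, hm⟩) →
    sameSuffix k (L.get ⟨i, by omega⟩) (L.get ⟨j, by omega⟩)

def cost {n : ℕ} (L : List (Fin n → Bool)) : ℕ :=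
  (L.zipWith lamPos L.tail).sum

/-!
Read `lamPos` as an ultrametric on `{0,1}^n`: `λ(x,z) ≤ max (λ(x,y), λ(y,z))`, with equality
whenever `λ(x,y) < λ(y,z)`. If `λ(x_i,x_j) = β` for some `j > i`, then `x_i, …, x_j` share the
suffix beyond position `β`, and by the genlex property so does `x_{i+1}`; hence
`λ(x_i,x_{i+1}) = β`. For `j > i + 1`, the strict ultrametric inequality with pivot `x_i` or
`x_{i+1}` shows that `λ(x_i,x_j)` and `λ(x_{i+1},x_j)` coincide as soon as either exceeds `β`,
which is exactly the claimed set identity.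
-/

def branchings {n : ℕ} (L : List (Fin n → Bool)) (i : ℕ) (hi : i < L.length) : Set ℕ :=
  {v | ∃ j, ∃ hj : j < L.length, i < j ∧ v = lamPos (L.get ⟨i, hi⟩) (L.get ⟨j, hj⟩)}

section lamPos

variable {n : ℕ}

lemma lamPos_le_iff (x y : Fin n → Bool) (k : ℕ) :
    lamPos x y ≤ k ↔ ∀ i : Fin n, k ≤ (i : ℕ) → x i = y i := by
  simp only [lamPos, Finset.sup_le_iff, Finset.mem_filter, Finset.mem_univ, true_and]
  refine forall_congr' fun i => ⟨fun h hk => ?_, fun h hne => ?_⟩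
  · by_contra hne
    have := h hne
    omega
  · by_contra hlt
    exact hne (h (by omega))

lemma lamPos_comm (x y : Fin n → Bool) : lamPos x y = lamPos y x := by
  apply le_antisymm <;>
  · rw [lamPos_le_iff]
    exact fun i hi => ((lamPos_le_iff _ _ _).1 le_rfl i hi).symm

lemma lamPos_eq_zero_iff {x y : Fin n → Bool} : lamPos x y = 0 ↔ x = y := by
  rw [← Nat.le_zero, lamPos_le_iff, funext_iff]
  exact forall_congr' fun i => ⟨fun h => h (Nat.zero_le _), fun h _ => h⟩

lemma lamPos_le (x y : Fin n → Bool) : lamPos x y ≤ n :=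
  Finset.sup_le fun i _ => i.isLt

lemma lamPos_le_max (x y z : Fin n → Bool) :
    lamPos x z ≤ max (lamPos x y) (lamPos y z) := by
  rw [lamPos_le_iff]
  exact fun i hi => ((lamPos_le_iff x y _).1 (le_max_left _ _) i hi).trans
    ((lamPos_le_iff y z _).1 (le_max_right _ _) i hi)

lemma lamPos_eq_of_lamPos_lt {x y z : Fin n → Bool} (h : lamPos x y < lamPos y z) :
    lamPos x z = lamPos y z := by
  have h₁ := lamPos_le_max x y z
  have h₂ := lamPos_le_max y x z
  rw [lamPos_comm y x] at h₂
  omega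

lemma sameSuffix_sub_iff {x y : Fin n → Bool} {k : ℕ} (hk : k ≤ n) :
    sameSuffix (n - k) x y ↔ lamPos x y ≤ k := by
  rw [lamPos_le_iff, sameSuffix, Nat.sub_sub_self hk]

end lamPos

lemma List.Nodup.lamPos_get_pos {n : ℕ} {L : List (Fin n → Bool)} (hL : L.Nodup)
    {a b : Fin L.length} (hab : a ≠ b) : 0 < lamPos (L.get a) (L.get b) :=
  Nat.pos_of_ne_zero fun h => hab (hL.get_inj_iff.1 (lamPos_eq_zero_iff.1 h))

lemma IsGenlex.lamPos_le_lamPos {n : ℕ} {L : List (Fin n → Bool)} (hgen : IsGenlex L)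
    {a b c : ℕ} (hab : a ≤ b) (hbc : b ≤ c) (hc : c < L.length) :
    lamPos (L.get ⟨a, by omega⟩) (L.get ⟨b, by omega⟩)
      ≤ lamPos (L.get ⟨a, by omega⟩) (L.get ⟨c, hc⟩) := by
  have hk := lamPos_le (L.get ⟨a, by omega⟩) (L.get ⟨c, hc⟩)
  exact (sameSuffix_sub_iff hk).1 (hgen _ a b c hab hbc hc ((sameSuffix_sub_iff hk).2 le_rfl))

lemma IsGenlex.lamPos_succ_eq_of_isLeast {n : ℕ} {L : List (Fin n → Bool)} (hgen : IsGenlex L)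
    {i : ℕ} (hi : i + 1 < L.length) {β : ℕ} (hβ : IsLeast (branchings L i (by omega)) β) :
    lamPos (L.get ⟨i, by omega⟩) (L.get ⟨i + 1, hi⟩) = β := by
  obtain ⟨j, hj, hij, rfl⟩ := hβ.1
  exact le_antisymm (hgen.lamPos_le_lamPos (Nat.le_succ i) hij hj) (hβ.2 ⟨i + 1, hi, by omega, rfl⟩)

theorem branchings_update {n : ℕ} (X : Finset (Fin n → Bool))
    (L : List (Fin n → Bool)) (hL : IsOrdering X L) (hgen : IsGenlex L)
    (i : ℕ) (hi : i + 1 < L.length) (β : ℕ)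
    (hβ : IsLeast {v | ∃ j, ∃ hj : j < L.length, i < j ∧
      v = lamPos (L.get ⟨i, by omega⟩) (L.get ⟨j, hj⟩)} β) :
    {v | ∃ j, ∃ hj : j < L.length, i < j ∧
        v = lamPos (L.get ⟨i, by omega⟩) (L.get ⟨j, hj⟩)} \ {β}
    = {v | ∃ j, ∃ hj : j < L.length, i + 1 < j ∧
        v = lamPos (L.get ⟨i + 1, hi⟩) (L.get ⟨j, hj⟩)} \ Set.Icc 1 β := by
  have hxy := hgen.lamPos_succ_eq_of_isLeast hi hβ
  ext v
  simp only [Set.mem_sdiff, Set.mem_ofPred_eq, Set.mem_singleton_iff, Set.mem_Icc, not_and, not_le]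
  constructor
  · rintro ⟨⟨j, hj, hij, rfl⟩, hvβ⟩
    have hβlt := lt_of_le_of_ne (hβ.2 ⟨j, hj, hij, rfl⟩) (Ne.symm hvβ)
    have hij' : i + 1 < j := by
      rcases (Nat.succ_le_of_lt hij).lt_or_eq with h | rfl
      · exact h
      · exact absurd hxy hvβ
    rw [lamPos_comm] at hxy
    exact ⟨⟨j, hj, hij', (lamPos_eq_of_lamPos_lt (hxy ▸ hβlt)).symm⟩, fun _ => hβlt⟩
  · rintro ⟨⟨j, hj, hij, rfl⟩, hvβ⟩
    have hβlt := hvβ (hL.1.lamPos_get_pos (by simp only [ne_eq, Fin.mk.injEq]; omega))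
    have hxz := lamPos_eq_of_lamPos_lt (hxy ▸ hβlt)
    exact ⟨⟨j, hj, by omega, hxz.symm⟩, by omega⟩
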